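/- arXiv:math/0510092 — 7 statements merged into one kernel-verified Lean document; each statement's English description precedes it below -/
import Mathlib

section
/- Let q be an odd prime power with q ≥ 5, and let t ∈ F_q be a non-square. Then there exists a nonzero element i ∈ F_q such that i is a square in F_q and t - i is not a square in F_q. -/
open Finset

private lemma key_sum {F : Type*} [Field F] (S : Finset F)
    (hS : ∀ x, x ∈ S ↔ x ≠ 0 ∧ ∃ s : F, s ^ 2 = x)
    (t : F) (ht : ¬ ∃ s : F, s ^ 2 = t)
    (H : ∀ i : F, i ≠ 0 → (∃ s : F, s ^ 2 = i) → ∃ s : F, s ^ 2 = t - i) :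
    (S.card : F) * t = 2 * ∑ x ∈ S, x := by
  classical
  have hmem : ∀ i ∈ S, t - i ∈ S := by
    intro i hi
    rw [hS] at hi ⊢
    obtain ⟨hi0, hisq⟩ := hi
    refine ⟨?_, H i hi0 hisq⟩
    intro h
    exact ht (by obtain ⟨s, hs⟩ := hisq; exact ⟨s, by rw [hs]; linear_combination -h⟩)
  have hinj : Set.InjOn (fun x => t - x) S := by
    intro a _ b _ hab
    simpa using hab
  have himg : S.image (fun x => t - x) = S := by
    apply Finset.eq_of_subset_of_card_le
    · intro x hx
      obtain ⟨i, hi, rfl⟩ := Finset.mem_image.mp hx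
      exact hmem i hi
    · rw [Finset.card_image_of_injOn hinj]
  have hsum : ∑ x ∈ S, x = ∑ x ∈ S, (t - x) := by
    conv_lhs => rw [← himg]
    rw [Finset.sum_image (fun a ha b hb h => hinj ha hb h)]
  rw [Finset.sum_sub_distrib, Finset.sum_const, nsmul_eq_mul] at hsum
  linear_combination -hsum

theorem stmt1 (F : Type*) [Field F] [Fintype F] (hodd : Odd (Fintype.card F))
    (hq : 5 ≤ Fintype.card F) (t : F) (ht : ¬ ∃ s : F, s ^ 2 = t) :
    ∃ i : F, i ≠ 0 ∧ (∃ s : F, s ^ 2 = i) ∧ ¬ ∃ s : F, s ^ 2 = t - i := by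
  classical
  by_contra hcon
  push_neg at hcon
  have ht0 : t ≠ 0 := fun h => ht ⟨0, by simp [h]⟩
  have h2 : (2 : F) ≠ 0 := by
    intro h2
    have hchar : ringChar F = 2 := by
      have hdvd : (ringChar F : ℕ) ∣ 2 := by
        rw [← Nat.cast_ofNat (n := 2)] at h2
        exact (CharP.cast_eq_zero_iff F (ringChar F) 2).mp h2
      have hle : ringChar F ≤ 2 := Nat.le_of_dvd (by norm_num) hdvd
      have h1 : ringChar F ≠ 1 := CharP.ringChar_ne_one
      have h0 : ringChar F ≠ 0 := by
        intro h
        rw [h, zero_dvd_iff] at hdvd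
        omega
      omega
    have hev := FiniteField.even_card_iff_char_two.mp hchar
    obtain ⟨k, hk⟩ := hodd
    omega
  set S : Finset F := univ.filter (fun x => x ≠ 0 ∧ ∃ s : F, s ^ 2 = x) with hSdef
  have hS : ∀ x, x ∈ S ↔ x ≠ 0 ∧ ∃ s : F, s ^ 2 = x := by
    intro x; simp [hSdef]
  -- cardinality: 2 * S.card = q - 1
  have hcard : 2 * S.card = Fintype.card F - 1 := by
    have hmaps : ∀ s ∈ univ.erase (0 : F), s ^ 2 ∈ S := by
      intro s hs
      rw [Finset.mem_erase] at hs
      exact (hS _).mpr ⟨pow_ne_zero 2 hs.1, ⟨s, rfl⟩⟩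
    have hfib := Finset.card_eq_sum_card_fiberwise hmaps
    have hfib2 : ∀ a ∈ S, ((univ.erase (0:F)).filter (fun s => s ^ 2 = a)).card = 2 := by
      intro a ha
      obtain ⟨ha0, u, hu⟩ := (hS a).mp ha
      have hu0 : u ≠ 0 := fun h => ha0 (by rw [← hu, h]; ring)
      have huu : u ≠ -u := by
        intro h
        apply hu0
        have : (2 : F) * u = 0 := by linear_combination h
        exact (mul_eq_zero.mp this).resolve_left h2
      have : (univ.erase (0:F)).filter (fun s => s ^ 2 = a) = {u, -u} := by
        ext x
        simp only [Finset.mem_filter, Finset.mem_erase, Finset.mem_univ, and_true,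
          Finset.mem_insert, Finset.mem_singleton, true_and]
        constructor
        · rintro ⟨hx0, hx⟩
          have : x ^ 2 = u ^ 2 := by rw [hx, hu]
          exact sq_eq_sq_iff_eq_or_eq_neg.mp this
        · rintro (rfl | rfl)
          · exact ⟨hu0, hu⟩
          · exact ⟨neg_ne_zero.mpr hu0, by rw [← hu]; ring⟩
      rw [this, Finset.card_insert_of_notMem (by simpa using huu), Finset.card_singleton]
    rw [Finset.sum_congr rfl hfib2, Finset.sum_const, smul_eq_mul, mul_comm] at hfib
    rw [← hfib, Finset.card_erase_of_mem (Finset.mem_univ 0), Finset.card_univ]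
  have hcardF : (S.card : F) ≠ 0 := by
    intro h0
    have h1le : 1 ≤ Fintype.card F := Fintype.card_pos
    have : ((2 * S.card : ℕ) : F) = ((Fintype.card F - 1 : ℕ) : F) := by rw [hcard]
    rw [Nat.cast_sub h1le, Nat.cast_card_eq_zero, Nat.cast_mul, Nat.cast_ofNat, h0] at this
    simp at this
  -- find a nonzero square a ≠ 1
  obtain ⟨x, hx⟩ : ∃ x : F, x ∉ ({0, 1, -1} : Finset F) := by
    by_contra hall
    push_neg at hall
    have : (univ : Finset F) ⊆ {0, 1, -1} := fun x _ => hall x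
    have := Finset.card_le_card this
    rw [Finset.card_univ] at this
    have a1 := Finset.card_insert_le (0:F) ({1, -1} : Finset F)
    have a2 := Finset.card_insert_le (1:F) ({-1} : Finset F)
    have a3 := Finset.card_singleton (-1 : F)
    omega
  simp only [Finset.mem_insert, Finset.mem_singleton, not_or] at hx
  obtain ⟨hx0, hx1, hxm1⟩ := hx
  set a : F := x ^ 2 with ha
  have ha0 : a ≠ 0 := pow_ne_zero 2 hx0
  have ha1 : a ≠ 1 := by
    intro h
    rcases sq_eq_sq_iff_eq_or_eq_neg.mp (show x ^ 2 = (1:F) ^ 2 by rw [← ha, h]; ring) with h' | h'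
    · exact hx1 h'
    · exact hxm1 (by simpa using h')
  have hat : ¬ ∃ s : F, s ^ 2 = a * t := by
    rintro ⟨r, hr⟩
    exact ht ⟨r * x⁻¹, by field_simp; linear_combination hr⟩
  have H' : ∀ i : F, i ≠ 0 → (∃ s : F, s ^ 2 = i) → ∃ s : F, s ^ 2 = a * t - i := by
    rintro i hi0 ⟨u, hu⟩
    have hia : i * a⁻¹ ≠ 0 := mul_ne_zero hi0 (inv_ne_zero ha0)
    obtain ⟨s, hs⟩ := hcon (i * a⁻¹) hia ⟨u * x⁻¹, by field_simp; linear_combination x ^ 2 * hu⟩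
    refine ⟨x * s, ?_⟩
    have : s ^ 2 = t - i * a⁻¹ := hs
    field_simp at this ⊢
    linear_combination this
  have k1 := key_sum S hS t ht hcon
  have k2 := key_sum S hS (a * t) hat H'
  have : (S.card : F) * t * (a - 1) = 0 := by linear_combination k2 - k1
  rcases mul_eq_zero.mp this with h | h
  · exact (mul_ne_zero hcardF ht0) h
  · exact ha1 (by linear_combination h)
end

section
/- Let q ≥ 5 be an odd prime power and a ∈ F_q with a² + 1 not a square in F_q. Then there exists t ∈ F_q∗ such that for every i ∈ F_q, every point A on the line y = a·x + i, and every point B on the line y = a·x + i + t, the quadrance Q(A,B) ≠ 1. -/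
open Finset

private lemma char_ne_two (F : Type*) [Field F] [Fintype F] (hodd : Odd (Fintype.card F)) :
    ringChar F ≠ 2 := by
  intro h
  have h2 := FiniteField.even_card_iff_char_two.mp h
  obtain ⟨k, hk⟩ := hodd
  omega

private lemma sum_quadChar_sq_sub (F : Type*) [Field F] [Fintype F] [DecidableEq F]
    (hF : ringChar F ≠ 2) (m : F) (hm : m ≠ 0) :
    ∑ t : F, quadraticChar F (t ^ 2 - m) = -1 := by
  set χ := quadraticChar F with hχ
  have step1 : ∑ t : F, χ (t ^ 2 - m)
      = ∑ u : F, (#{t : F | t ^ 2 = u}.toFinset : ℤ) * χ (u - m) := by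
    rw [← Finset.sum_fiberwise' univ (fun t : F => t ^ 2) (fun u => χ (u - m))]
    refine Finset.sum_congr rfl fun u _ => ?_
    rw [Finset.sum_const, nsmul_eq_mul]
    congr 1
    simp [Set.toFinset_setOf]
  have step2 : ∑ u : F, (#{t : F | t ^ 2 = u}.toFinset : ℤ) * χ (u - m)
      = ∑ u : F, (χ u + 1) * χ (u - m) := by
    refine Finset.sum_congr rfl fun u _ => ?_
    rw [quadraticChar_card_sqrts hF u]
  have step3 : ∑ u : F, (χ u + 1) * χ (u - m)
      = ∑ u : F, χ u * χ (u - m) + ∑ u : F, χ (u - m) := by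
    rw [← Finset.sum_add_distrib]
    exact Finset.sum_congr rfl fun u _ => by ring
  have step4 : ∑ u : F, χ (u - m) = 0 := by
    exact (Fintype.sum_bijective (Equiv.subRight m) (Equiv.subRight m).bijective
      (fun u => χ (u - m)) (fun v => χ v) (fun u => by simp)).trans (quadraticChar_sum_zero hF)
  have step5 : ∑ u : F, χ u * χ (u - m) = ∑ u : F, χ (u * (u - m)) := by
    exact Finset.sum_congr rfl fun u _ => (map_mul χ u (u - m)).symm
  have step6 : ∑ u : F, χ (u * (u - m)) = ∑ u ∈ univ.erase (0 : F), χ (1 - m * u⁻¹) := by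
    have hz : χ ((0 : F) * ((0 : F) - m)) = 0 := by
      rw [zero_mul]; exact quadraticChar_zero
    rw [← Finset.sum_erase (f := fun u : F => χ (u * (u - m))) univ hz]
    refine Finset.sum_congr rfl fun u hu => ?_
    have hu0 : u ≠ 0 := Finset.ne_of_mem_erase hu
    have : u * (u - m) = u ^ 2 * (1 - m * u⁻¹) := by field_simp
    rw [this, map_mul, quadraticChar_sq_one' hu0, one_mul]
  have step7 : ∑ u ∈ univ.erase (0 : F), χ (1 - m * u⁻¹)
      = ∑ v ∈ univ.erase (1 : F), χ v := by
    refine Finset.sum_bij' (fun u _ => 1 - m * u⁻¹) (fun v _ => m * (1 - v)⁻¹) ?_ ?_ ?_ ?_ ?_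
    · intro u hu
      have hu0 : u ≠ 0 := Finset.ne_of_mem_erase hu
      simp only [Finset.mem_erase, Finset.mem_univ, and_true]
      intro h
      have : m * u⁻¹ = 0 := by linear_combination -h
      rcases mul_eq_zero.mp this with h' | h'
      · exact hm h'
      · exact hu0 (inv_eq_zero.mp h')
    · intro v hv
      have hv1 : v ≠ 1 := Finset.ne_of_mem_erase hv
      simp only [Finset.mem_erase, Finset.mem_univ, and_true]
      intro h
      rcases mul_eq_zero.mp h with h' | h'
      · exact hm h'
      · exact hv1 (by have := inv_eq_zero.mp h'; linear_combination -this)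
    · intro u hu
      have hu0 : u ≠ 0 := Finset.ne_of_mem_erase hu
      show m * (1 - (1 - m * u⁻¹))⁻¹ = u
      have h1 : (1 : F) - (1 - m * u⁻¹) = m * u⁻¹ := by ring
      rw [h1, mul_inv_rev, inv_inv, ← mul_assoc, mul_comm m u, mul_assoc,
        mul_inv_cancel₀ hm, mul_one]
    · intro v hv
      have hv1 : v ≠ 1 := Finset.ne_of_mem_erase hv
      have h1v : (1 : F) - v ≠ 0 := fun h => hv1 (by linear_combination -h)
      show 1 - m * (m * (1 - v)⁻¹)⁻¹ = v
      rw [mul_inv_rev, inv_inv, ← mul_assoc, mul_comm m (1 - v), mul_assoc,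
        mul_inv_cancel₀ hm, mul_one]
      ring
    · intro u hu
      rfl
  have step8 : ∑ v ∈ univ.erase (1 : F), χ v = -1 := by
    have := quadraticChar_sum_zero hF
    rw [← Finset.add_sum_erase univ χ (Finset.mem_univ (1 : F))] at this
    simpa using this
  rw [step1, step2, step3, step4, step5, step6, step7, step8, add_zero]

theorem stmt3 (F : Type*) [Field F] [Fintype F] (hodd : Odd (Fintype.card F))
    (hq : 5 ≤ Fintype.card F) (a : F) (ha : ¬ ∃ s : F, s ^ 2 = a ^ 2 + 1) :
    ∃ t : F, t ≠ 0 ∧ ∀ i x y : F,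
      (x - y) ^ 2 + ((a * x + i) - (a * y + i + t)) ^ 2 ≠ 1 := by
  classical
  have hF : ringChar F ≠ 2 := char_ne_two F hodd
  set m : F := a ^ 2 + 1 with hmdef
  have hmsq : ¬ IsSquare m := by
    rintro ⟨s, hs⟩
    exact ha ⟨s, by rw [hs]; ring⟩
  have hm0 : m ≠ 0 := fun h => hmsq (h ▸ ⟨0, by ring⟩)
  set χ := quadraticChar F with hχ
  -- find t ≠ 0 with m - t^2 nonsquare
  have key : ∃ t : F, t ≠ 0 ∧ ¬ IsSquare (m - t ^ 2) := by
    by_contra hc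
    push_neg at hc
    have hall : ∀ t : F, t ≠ 0 → χ (m - t ^ 2) = 1 := by
      intro t ht
      have hsq := hc t ht
      have hne : m - t ^ 2 ≠ 0 := by
        intro h
        exact hmsq ⟨t, by linear_combination h + sq t⟩
      exact (quadraticChar_one_iff_isSquare hne).mpr hsq
    have hS : ∑ t : F, χ (m - t ^ 2) = (Fintype.card F : ℤ) - 2 := by
      rw [← Finset.add_sum_erase univ _ (Finset.mem_univ (0 : F))]
      have h0 : χ (m - 0 ^ 2) = -1 := by
        rw [quadraticChar_neg_one_iff_not_isSquare]
        simpa using hmsq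
      have hrest : ∑ t ∈ univ.erase (0 : F), χ (m - t ^ 2)
          = ∑ t ∈ univ.erase (0 : F), (1 : ℤ) := by
        exact Finset.sum_congr rfl fun t ht => hall t (Finset.ne_of_mem_erase ht)
      rw [h0, hrest, Finset.sum_const, nsmul_eq_mul, mul_one,
        Finset.card_erase_of_mem (Finset.mem_univ _), Finset.card_univ]
      have h5 : 5 ≤ Fintype.card F := hq
      omega
    have hS' : ∑ t : F, χ (m - t ^ 2) = χ (-1) * (-1) := by
      have : ∀ t : F, χ (m - t ^ 2) = χ (-1) * χ (t ^ 2 - m) := by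
        intro t
        rw [← map_mul]
        congr 1
        ring
      rw [Finset.sum_congr rfl fun t _ => this t, ← Finset.mul_sum,
        sum_quadChar_sq_sub F hF m hm0]
    rw [hS'] at hS
    rcases quadraticChar_dichotomy (by norm_num : (-1 : F) ≠ 0) with h | h <;>
      rw [h] at hS <;> omega
  obtain ⟨t, ht0, htns⟩ := key
  refine ⟨t, ht0, fun i x y hQ => ?_⟩
  apply htns
  refine ⟨(1 + a ^ 2) * (x - y) - a * t, ?_⟩
  have h2 : (2 : F) ≠ 0 := Ring.two_ne_zero hF
  linear_combination -(1 + a ^ 2) * hQ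
end

section
/- Let q be a prime with q ≡ 7 or q ≡ -7 (mod 12). Then the unit-quadrance graph D_q on F_q² contains no triangle; equivalently, there do not exist x, y, u, v ∈ F_q with x² + y² = 1, u² + v² = 1, and (x+u)² + (y+v)² = 1. -/
lemma aux_not_sq : ¬ IsSquare (2 : ZMod 3) := by decide

theorem stmt4 (q : ℕ) (hp : q.Prime) (hq : q % 12 = 7 ∨ q % 12 = 5) :
    ¬ ∃ x y u v : ZMod q, x ^ 2 + y ^ 2 = 1 ∧ u ^ 2 + v ^ 2 = 1 ∧
      (x + u) ^ 2 + (y + v) ^ 2 = 1 := by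
  haveI : Fact q.Prime := ⟨hp⟩
  haveI : Fact (Nat.Prime 3) := ⟨by norm_num⟩
  rintro ⟨x, y, u, v, h1, h2, h3⟩
  have hd : 2 * (x * u + y * v) = -1 := by linear_combination h3 - h1 - h2
  have key : (2 * (x * v - y * u)) ^ 2 = 3 := by
    linear_combination (4*u^2+4*v^2) * h1 + 4 * h2 + (1 - 2*(x*u+y*v)) * hd
  have hsq : IsSquare (3 : ZMod q) := ⟨2 * (x * v - y * u), by linear_combination -key⟩
  -- q mod 3 and mod 4 facts
  rcases hq with h7 | h5
  · -- q % 4 = 3, use reciprocity for both ≡ 3 mod 4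
    have hq4 : q % 4 = 3 := by omega
    have hne : (3 : ℕ) ≠ q := by omega
    have := (ZMod.exists_sq_eq_prime_iff_of_mod_four_eq_three (p := 3) (q := q)
      (by norm_num) hq4 hne).mp ?_
    · exact this (by exact_mod_cast hsq)
    · -- IsSquare (q : ZMod 3), since q ≡ 1 mod 3
      have : (q : ZMod 3) = 1 := by
        have hm : q % 3 = 1 := by omega
        rw [← ZMod.natCast_mod q 3, hm]; rfl
      rw [this]; exact IsSquare.one
  · -- q % 4 = 1
    have hq4 : q % 4 = 1 := by omega
    have h := (ZMod.exists_sq_eq_prime_iff_of_mod_four_eq_one (p := q) (q := 3)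
      hq4 (by norm_num)).mp (by exact_mod_cast hsq)
    -- h : IsSquare (q : ZMod 3), but q ≡ 2 mod 3
    have h2' : (q : ZMod 3) = 2 := by
      have hm : q % 3 = 2 := by omega
      rw [← ZMod.natCast_mod q 3, hm]; rfl
    rw [h2'] at h
    exact aux_not_sq h
end

section
/- Let q = pⁿ with p an odd prime, q > 3, and suppose there exists a ∈ F_q with a² + 1 not a square in F_q. Then the chromatic number of the unit-quadrance graph D_q on F_q² is at most pⁿ⁻¹·(p+1)/2, i.e., there is a proper coloring of F_q² with pⁿ⁻¹(p+1)/2 colors such that no two points at quadrance 1 receive the same color. -/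
open Finset

/-- The unit-quadrance graph on `F × F`. -/
def unitQuadranceGraph (F : Type*) [Field F] : SimpleGraph (F × F) :=
  SimpleGraph.fromRel (fun A B => (A.1 - B.1) ^ 2 + (A.2 - B.2) ^ 2 = 1)


lemma existsC {F : Type*} [Field F] [Fintype F] [DecidableEq F]
    (hq : 3 < Fintype.card F) (h2 : (2:F) ≠ 0)
    (d : F) (hd : ¬ IsSquare d) :
    ∃ c : F, c ≠ 0 ∧ ¬ IsSquare (d - c^2) := by
  by_contra hcon
  push_neg at hcon
  have hd0 : d ≠ 0 := fun h => hd (h ▸ ⟨0, by ring⟩)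
  set S : Finset F := univ.filter (fun s => s ≠ 0 ∧ IsSquare s) with hSdef
  have hmemS : ∀ s : F, s ∈ S ↔ s ≠ 0 ∧ IsSquare s := by
    intro s; simp [hSdef]
  have hstep : ∀ s ∈ S, d - s ∈ S := by
    intro s hs
    rw [hmemS] at hs ⊢
    obtain ⟨hs0, e, he⟩ := hs
    have he0 : e ≠ 0 := by rintro rfl; exact hs0 (by simp [he])
    refine ⟨fun h => hd ((sub_eq_zero.mp h) ▸ ⟨e, he⟩), ?_⟩
    have := hcon e he0
    rwa [sq, ← he] at this
  -- the involution s ↦ d - s on S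
  have hinv : ∑ s ∈ S, s = ∑ s ∈ S, (d - s) := by
    refine Finset.sum_nbij' (fun s => d - s) (fun s => d - s) hstep hstep
      (fun a _ => by ring) (fun a _ => by ring) (fun a _ => by ring)
  -- there is x ∉ {0, 1, -1}
  have hx : ∃ x : F, x ≠ 0 ∧ x ≠ 1 ∧ x ≠ -1 := by
    by_contra hx
    push_neg at hx
    have hsub : (univ : Finset F) ⊆ {0, 1, -1} := by
      intro x _
      simp only [mem_insert, mem_singleton]
      rcases eq_or_ne x 0 with h | h
      · exact Or.inl h
      rcases eq_or_ne x 1 with h1 | h1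
      · exact Or.inr (Or.inl h1)
      · exact Or.inr (Or.inr (hx x h h1))
    have hle := Finset.card_le_card hsub
    have h3 : ({0, 1, -1} : Finset F).card ≤ 3 := by
      refine le_trans (Finset.card_insert_le _ _) ?_
      refine le_trans (Nat.add_le_add_right (Finset.card_insert_le _ _) 1) ?_
      simp
    rw [Finset.card_univ] at hle
    omega
  obtain ⟨x, hx0, hx1, hxm1⟩ := hx
  -- sum of nonzero squares is zero
  have hsumzero : ∑ s ∈ S, s = 0 := by
    set t : F := x^2 with ht
    have ht0 : t ≠ 0 := pow_ne_zero 2 hx0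
    have htsq : IsSquare t := ⟨x, sq x⟩
    have ht1 : t ≠ 1 := by
      intro h
      have : (x - 1) * (x + 1) = 0 := by linear_combination h
      rcases mul_eq_zero.mp this with h' | h'
      · exact hx1 (sub_eq_zero.mp h')
      · exact hxm1 (eq_neg_of_add_eq_zero_left h')
    have hbij : ∑ s ∈ S, (t * s) = ∑ s ∈ S, s := by
      refine Finset.sum_nbij' (fun s => t * s) (fun s => t⁻¹ * s) ?_ ?_ ?_ ?_ ?_
      · intro a ha
        rw [hmemS] at ha ⊢
        exact ⟨mul_ne_zero ht0 ha.1, htsq.mul ha.2⟩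
      · intro a ha
        rw [hmemS] at ha ⊢
        refine ⟨mul_ne_zero (inv_ne_zero ht0) ha.1, ?_⟩
        obtain ⟨e, he⟩ := htsq
        have he0 : e ≠ 0 := by rintro rfl; exact ht0 (by simp [he])
        obtain ⟨f, hf⟩ := ha.2
        refine ⟨e⁻¹ * f, ?_⟩
        rw [he, hf]
        field_simp
      · intro a _; rw [← mul_assoc, inv_mul_cancel₀ ht0, one_mul]
      · intro a _; rw [← mul_assoc, mul_inv_cancel₀ ht0, one_mul]
      · intro a _; rfl
    have h' : t * ∑ s ∈ S, s = ∑ s ∈ S, s := by rw [Finset.mul_sum]; exact hbij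
    have h'' : (t - 1) * ∑ s ∈ S, s = 0 := by rw [sub_mul, one_mul, h', sub_self]
    rcases mul_eq_zero.mp h'' with h | h
    · exact absurd (sub_eq_zero.mp h) ht1
    · exact h
  -- hence #S • d = 0
  have hcard_d : (S.card : F) * d = 0 := by
    have h := hinv
    rw [Finset.sum_sub_distrib, Finset.sum_const, hsumzero, nsmul_eq_mul] at h
    linear_combination -h
  have hScard0 : (S.card : F) = 0 := by
    rcases mul_eq_zero.mp hcard_d with h | h
    · exact h
    · exact absurd h hd0
  -- counting: 2 * #S = card F - 1
  have himg : (univ.erase (0:F)).image (fun x => x^2) = S := by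
    ext s
    simp only [Finset.mem_image, Finset.mem_erase, Finset.mem_univ, and_true, hmemS]
    constructor
    · rintro ⟨y, hy0, rfl⟩
      exact ⟨pow_ne_zero 2 hy0, ⟨y, sq y⟩⟩
    · rintro ⟨hs0, e, rfl⟩
      have he0 : e ≠ 0 := by rintro rfl; exact hs0 (by simp)
      exact ⟨e, he0, sq e⟩
  have hfib : ∀ b ∈ S, ((univ.erase (0:F)).filter (fun x => x^2 = b)).card = 2 := by
    intro b hb
    rw [hmemS] at hb
    obtain ⟨hb0, e, he⟩ := hb
    have he0 : e ≠ 0 := by rintro rfl; exact hb0 (by simp [he])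
    have hee : e ≠ -e := by
      intro h
      apply he0
      have : (2:F) * e = 0 := by linear_combination h
      rcases mul_eq_zero.mp this with h' | h'
      · exact absurd h' h2
      · exact h'
    have : (univ.erase (0:F)).filter (fun x => x^2 = b) = {e, -e} := by
      ext y
      simp only [Finset.mem_filter, Finset.mem_erase, Finset.mem_univ, and_true,
        Finset.mem_insert, Finset.mem_singleton, true_and]
      constructor
      · rintro ⟨hy0, hy⟩
        have : (y - e) * (y + e) = 0 := by rw [he] at hy; linear_combination hy
        rcases mul_eq_zero.mp this with h' | h'
        · exact Or.inl (sub_eq_zero.mp h')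
        · exact Or.inr (eq_neg_of_add_eq_zero_left h')
      · rintro (rfl | rfl)
        · exact ⟨he0, by rw [he, sq]⟩
        · exact ⟨neg_ne_zero.mpr he0, by rw [he]; ring⟩
    rw [this, Finset.card_pair hee]
  have hcount : (univ.erase (0:F)).card = 2 * S.card := by
    rw [Finset.card_eq_sum_card_image (fun x => x^2) (univ.erase 0), himg,
      Finset.sum_const_nat hfib, Nat.mul_comm]
  have hcFpos : 1 ≤ Fintype.card F := Fintype.card_pos
  rw [Finset.card_erase_of_mem (Finset.mem_univ 0), Finset.card_univ] at hcount
  -- cast to F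
  have : ((Fintype.card F - 1 : ℕ) : F) = 0 := by
    rw [hcount]
    push_cast
    rw [hScard0]
    ring
  rw [Nat.cast_sub hcFpos, FiniteField.cast_card_eq_zero, Nat.cast_one] at this
  have : (1 : F) = 0 := by linear_combination -this
  exact one_ne_zero this

theorem stmt8 (p n : ℕ) (hp : p.Prime) (hpodd : Odd p) (F : Type*) [Field F] [Fintype F]
    (hcard : Fintype.card F = p ^ n) (hq : 3 < p ^ n)
    (ha : ∃ a : F, ¬ ∃ s : F, s ^ 2 = a ^ 2 + 1) :
    (unitQuadranceGraph F).chromaticNumber ≤ (p ^ (n - 1) * (p + 1) / 2 : ℕ) := by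
  classical
  obtain ⟨a, ha⟩ := ha
  obtain ⟨k, hk⟩ := hpodd
  have hp3 : 3 ≤ p := by have := hp.two_le; omega
  have hn : n ≠ 0 := by rintro rfl; simp at hq
  set d : F := a^2 + 1 with hd_def
  have hd : ¬ IsSquare d := by
    rintro ⟨r, hr⟩
    exact ha ⟨r, by rw [sq]; exact hr.symm⟩
  have hq' : 3 < Fintype.card F := hcard ▸ hq
  -- characteristic facts
  haveI hFact : Fact p.Prime := ⟨hp⟩
  have hp0 : ((p : ℕ) : F) = 0 := by
    have h1 : ((Fintype.card F : ℕ) : F) = 0 := FiniteField.cast_card_eq_zero F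
    rw [hcard, Nat.cast_pow] at h1
    exact pow_eq_zero_iff hn |>.mp h1
  haveI hchar : CharP F p := (CharP.charP_iff_prime_eq_zero hp).mpr hp0
  have h2 : (2 : F) ≠ 0 := by
    intro h
    have hdvd := (CharP.cast_eq_zero_iff F p 2).mp (by exact_mod_cast h)
    have := Nat.le_of_dvd (by norm_num) hdvd
    omega
  obtain ⟨c, hc0, hc⟩ := existsC hq' h2 d hd
  -- ZMod p module structure
  letI : Algebra (ZMod p) F := ZMod.algebra F p
  have hker : LinearMap.ker (LinearMap.toSpanSingleton (ZMod p) F c) = ⊥ :=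
    LinearMap.ker_toSpanSingleton (ZMod p) hc0
  obtain ⟨g, hg⟩ := LinearMap.exists_leftInverse_of_injective _ hker
  have hgc : g c = 1 := by
    have := LinearMap.congr_fun hg 1
    simpa [LinearMap.toSpanSingleton_apply_one] using this
  set K := LinearMap.ker g with hK
  haveI : Fintype K := Fintype.ofFinite _
  -- the equivalence F ≃ K × ZMod p
  have hmem : ∀ t : F, t - g t • c ∈ K := by
    intro t
    simp [hK, LinearMap.mem_ker, map_sub, map_smul, hgc, smul_eq_mul]
  set e : F ≃ K × ZMod p :=
    { toFun := fun t => (⟨t - g t • c, hmem t⟩, g t)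
      invFun := fun x => (x.1 : F) + x.2 • c
      left_inv := fun t => by simp
      right_inv := fun x => by
        have hx : g (x.1 : F) = 0 := x.1.2
        have hgx : g ((x.1 : F) + x.2 • c) = x.2 := by
          rw [map_add, map_smul, hgc, hx, smul_eq_mul, mul_one, zero_add]
        refine Prod.ext (Subtype.ext ?_) hgx
        simp [hgx] } with he
  have hcardK : Fintype.card K * p = p ^ n := by
    have h1 : Fintype.card F = Fintype.card K * Fintype.card (ZMod p) := by
      rw [Fintype.card_congr e, Fintype.card_prod]
    rw [ZMod.card] at h1
    rw [← h1, hcard]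
  have hcardK' : Fintype.card K = p ^ (n - 1) := by
    have := hcardK
    rw [show n = (n-1) + 1 by omega, pow_succ] at this
    exact Nat.eq_of_mul_eq_mul_right hp.pos this
  -- the pairing function
  set m : ℕ := (p + 1) / 2 with hm
  have hmpos : 0 < m := by omega
  have hprlt : ∀ j : ZMod p, (j.val + 1) / 2 < m := by
    intro j
    have := ZMod.val_lt j
    omega
  set pr : ZMod p → Fin m := fun j => ⟨(j.val + 1) / 2, hprlt j⟩ with hpr
  -- the coloring
  have key : ∀ A B : F × F,
      (A.1 - B.1) ^ 2 + (A.2 - B.2) ^ 2 = 1 →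
      (fun P : F × F => ((⟨(P.1 + a * P.2) - g (P.1 + a * P.2) • c,
        hmem _⟩ : K), pr (g (P.1 + a * P.2)))) A ≠
      (fun P : F × F => ((⟨(P.1 + a * P.2) - g (P.1 + a * P.2) • c,
        hmem _⟩ : K), pr (g (P.1 + a * P.2)))) B := by
    intro A B hrel hcol
    simp only [Prod.mk.injEq, Subtype.mk.injEq] at hcol
    obtain ⟨hfst, hsnd⟩ := hcol
    set t1 : F := A.1 + a * A.2 with ht1
    set t2 : F := B.1 + a * B.2 with ht2
    set j1 := g t1 with hj1
    set j2 := g t2 with hj2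
    -- from fst: t1 - t2 = (j1 - j2) • c
    have hdiff : t1 - t2 = (j1 - j2) • c := by
      have := hfst
      rw [sub_smul]
      rw [sub_eq_sub_iff_sub_eq_sub] at this
      rw [this]
    -- from snd: j1 - j2 ∈ {0, 1, -1}
    have hj : j1 = j2 ∨ j1 = j2 + 1 ∨ j2 = j1 + 1 := by
      have hv : (j1.val + 1) / 2 = (j2.val + 1) / 2 := by
        simpa [hpr, Fin.mk.injEq] using hsnd
      have : j1.val = j2.val ∨ j1.val = j2.val + 1 ∨ j2.val = j1.val + 1 := by omega
      rcases this with h | h | h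
      · exact Or.inl (ZMod.val_injective p h)
      · refine Or.inr (Or.inl ?_)
        have : ((j1.val : ℕ) : ZMod p) = ((j2.val + 1 : ℕ) : ZMod p) := by rw [h]
        rwa [Nat.cast_add, Nat.cast_one, ZMod.natCast_val, ZMod.natCast_val,
          ZMod.cast_id, ZMod.cast_id] at this
      · refine Or.inr (Or.inr ?_)
        have : ((j2.val : ℕ) : ZMod p) = ((j1.val + 1 : ℕ) : ZMod p) := by rw [h]
        rwa [Nat.cast_add, Nat.cast_one, ZMod.natCast_val, ZMod.natCast_val,
          ZMod.cast_id, ZMod.cast_id] at this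
    -- hence t1 - t2 ∈ {0, c, -c}
    have htc : t1 - t2 = 0 ∨ t1 - t2 = c ∨ t1 - t2 = -c := by
      rcases hj with h | h | h
      · left; rw [hdiff, h, sub_self, zero_smul]
      · right; left; rw [hdiff, h, add_sub_cancel_left, one_smul]
      · right; right
        rw [hdiff, h]
        have : j1 - (j1 + 1) = -1 := by ring
        rw [this, neg_smul, one_smul]
    -- key identity : d - (t1 - t2)^2 is a square
    have hsq : IsSquare (d - (t1 - t2)^2) := by
      refine ⟨(A.2 - B.2) - a * (A.1 - B.1), ?_⟩
      have ht : t1 - t2 = (A.1 - B.1) + a * (A.2 - B.2) := by rw [ht1, ht2]; ring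
      rw [ht, hd_def]
      linear_combination -(a^2 + 1) * hrel
    rcases htc with h | h | h
    · rw [h] at hsq; simp at hsq; exact hd hsq
    · rw [h] at hsq; exact hc hsq
    · rw [h] at hsq; rw [neg_pow, pow_two] at hsq; simp at hsq
      exact hc (by simpa [sq] using hsq)
  -- build the coloring
  set col : SimpleGraph.Coloring (unitQuadranceGraph F) (K × Fin m) :=
    SimpleGraph.Coloring.mk
      (fun P => ((⟨(P.1 + a * P.2) - g (P.1 + a * P.2) • c, hmem _⟩ : K),
        pr (g (P.1 + a * P.2))))
      (by
        intro A B hAB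
        rw [unitQuadranceGraph, SimpleGraph.fromRel_adj] at hAB
        obtain ⟨hne, hrel | hrel⟩ := hAB
        · exact key A B hrel
        · have : (A.1 - B.1) ^ 2 + (A.2 - B.2) ^ 2 = 1 := by linear_combination hrel
          exact key A B this) with hcol
  have hcolorable : (unitQuadranceGraph F).Colorable (Fintype.card (K × Fin m)) :=
    col.colorable
  have hcardC : Fintype.card (K × Fin m) = p ^ (n - 1) * (p + 1) / 2 := by
    rw [Fintype.card_prod, Fintype.card_fin, hcardK']
    rw [Nat.mul_div_assoc _ (show 2 ∣ p + 1 from ⟨k + 1, by omega⟩)]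
  rw [hcardC] at hcolorable
  exact hcolorable.chromaticNumber_le
end

section
/- Let q be an odd prime power. If a ∈ F_q satisfies that a² + 1 is not a square in F_q, then for each i ∈ F_q the line {(x, ax + i) : x ∈ F_q} is an independent set (of size q) in the unit-quadrance graph D_q. -/
theorem stmt11 (F : Type*) [Field F] [Fintype F] (hodd : Odd (Fintype.card F))
    (a : F) (ha : ¬ ∃ s : F, s ^ 2 = a ^ 2 + 1) (i : F) :
    (∀ A ∈ {P : F × F | P.2 = a * P.1 + i}, ∀ B ∈ {P : F × F | P.2 = a * P.1 + i},
        ¬ (unitQuadranceGraph F).Adj A B) ∧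
      {P : F × F | P.2 = a * P.1 + i}.ncard = Fintype.card F := by
  constructor
  · rintro A hA B hB hadj
    simp only [Set.mem_setOf_eq] at hA hB
    obtain ⟨hne, h⟩ := hadj
    have key : (A.1 - B.1) ^ 2 + (A.2 - B.2) ^ 2 = 1 := by
      rcases h with h | h
      · exact h
      · rw [← h]; ring
    rw [hA, hB] at key
    have key2 : (A.1 - B.1) ^ 2 * (1 + a ^ 2) = 1 := by
      linear_combination key
    have hd : A.1 - B.1 ≠ 0 := by
      intro h0
      rw [h0] at key2
      simp at key2
    apply ha
    refine ⟨(A.1 - B.1)⁻¹, ?_⟩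
    have h1 : a ^ 2 + 1 = ((A.1 - B.1) ^ 2)⁻¹ := by
      refine eq_inv_of_mul_eq_one_right ?_
      linear_combination key2
    rw [← inv_pow] at h1
    exact h1.symm
  · have : {P : F × F | P.2 = a * P.1 + i} = Set.range (fun x : F => (x, a * x + i)) := by
      ext ⟨x, y⟩
      simp [eq_comm]
    have hinj : Function.Injective (fun x : F => (x, a * x + i)) := by
      intro x y hxy
      simpa using congrArg Prod.fst hxy
    rw [this, ← Nat.card_coe_set_eq, Nat.card_range_of_injective hinj,
      Nat.card_eq_fintype_card]
end

section
/- Let G be a finite simple graph with at least one edge, with largest adjacency eigenvalue λ₁ and smallest adjacency eigenvalue λ_min. Then the chromatic number of G satisfies χ(G) ≥ 1 - λ₁/λ_min (Hoffman's bound). -/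
open Matrix Finset

lemma aux_exists_eigvec {V : Type*} [Fintype V] [DecidableEq V] {M : Matrix V V ℝ} {μ : ℝ}
    (h : μ ∈ spectrum ℝ M) : ∃ x : V → ℝ, x ≠ 0 ∧ M *ᵥ x = μ • x := by
  rw [spectrum.mem_iff] at h
  rw [Matrix.isUnit_iff_isUnit_det, isUnit_iff_ne_zero, not_ne_iff] at h
  obtain ⟨v, hv, hv2⟩ := (Matrix.exists_mulVec_eq_zero_iff).2 h
  refine ⟨v, hv, ?_⟩
  have := hv2
  rw [Algebra.algebraMap_eq_smul_one, Matrix.sub_mulVec, Matrix.smul_mulVec,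
    Matrix.one_mulVec, sub_eq_zero] at this
  rw [← this]

lemma aux_rayleigh {V : Type*} [Fintype V] [DecidableEq V] {M : Matrix V V ℝ}
    (hM : M.IsHermitian) {c : ℝ} (hc : ∀ μ ∈ spectrum ℝ M, c ≤ μ) (y : V → ℝ) :
    c * (y ⬝ᵥ y) ≤ y ⬝ᵥ (M *ᵥ y) := by
  have hps : (M - c • (1 : Matrix V V ℝ)).PosSemidef := by
    have hdiag : (Matrix.diagonal (fun i => hM.eigenvalues i - c)).PosSemidef :=
      Matrix.PosSemidef.diagonal (fun i => sub_nonneg.2 (hc _ (hM.eigenvalues_mem_spectrum_real i)))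
    have key : M - c • (1 : Matrix V V ℝ) =
        (hM.eigenvectorUnitary : Matrix V V ℝ) * (Matrix.diagonal (fun i => hM.eigenvalues i - c)) *
          (star (hM.eigenvectorUnitary : Matrix V V ℝ)) := by
      have hU : (hM.eigenvectorUnitary : Matrix V V ℝ) *
          (star (hM.eigenvectorUnitary : Matrix V V ℝ)) = 1 :=
        Unitary.mul_star_self_of_mem hM.eigenvectorUnitary.2
      have hspec := hM.spectral_theorem
      simp only [Unitary.conjStarAlgAut_apply, Unitary.coe_star] at hspec
      have hd : Matrix.diagonal (fun i => hM.eigenvalues i - c)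
          = Matrix.diagonal (RCLike.ofReal ∘ hM.eigenvalues) - c • 1 := by
        ext i j
        by_cases h : i = j <;>
          simp [Matrix.diagonal, Matrix.one_apply, h, Matrix.sub_apply, Matrix.smul_apply]
      rw [hd, Matrix.mul_sub, Matrix.sub_mul, ← hspec]
      congr 1
      rw [Matrix.mul_smul, Matrix.mul_one, Matrix.smul_mul, hU]
    rw [key]
    simpa [Matrix.star_eq_conjTranspose] using hdiag.mul_mul_conjTranspose_same (hM.eigenvectorUnitary : Matrix V V ℝ)
  have := hps.dotProduct_mulVec_nonneg y
  rw [star_trivial, Matrix.sub_mulVec, Matrix.smul_mulVec, Matrix.one_mulVec,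
    dotProduct_sub, dotProduct_smul, sub_nonneg] at this
  simpa [smul_eq_mul] using this

theorem stmt14 (V : Type*) [Fintype V] [DecidableEq V] (G : SimpleGraph V)
    [DecidableRel G.Adj] (hedge : ∃ A B : V, G.Adj A B)
    (lam1 lamMin : ℝ)
    (h1 : lam1 ∈ spectrum ℝ (G.adjMatrix ℝ))
    (h1max : ∀ μ ∈ spectrum ℝ (G.adjMatrix ℝ), μ ≤ lam1)
    (hm : lamMin ∈ spectrum ℝ (G.adjMatrix ℝ))
    (hmmin : ∀ μ ∈ spectrum ℝ (G.adjMatrix ℝ), lamMin ≤ μ) :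
    1 - lam1 / lamMin ≤ (G.chromaticNumber.toNat : ℝ) := by
  set A : Matrix V V ℝ := G.adjMatrix ℝ with hA
  have hHerm : A.IsHermitian := by
    ext i j
    simp only [Matrix.conjTranspose_apply, hA, SimpleGraph.adjMatrix_apply, star_trivial]
    exact if_congr (G.adj_comm j i) rfl rfl
  obtain ⟨a, b, hab⟩ := hedge
  have hne : a ≠ b := G.ne_of_adj hab
  -- lamMin < 0
  have hneg : lamMin < 0 := by
    set y : V → ℝ := fun v => if v = a then 1 else if v = b then -1 else 0 with hy
    have hyy : y ⬝ᵥ y = 2 := by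
      rw [dotProduct]
      rw [show (2:ℝ) = ∑ v, ((if v = a then 1 else 0) + (if v = b then 1 else 0)) by
        rw [Finset.sum_add_distrib]; simp; norm_num]
      apply Finset.sum_congr rfl
      intro v _
      by_cases hva : v = a
      · subst hva; simp [hy, hne]
      · by_cases hvb : v = b <;> simp [hy, hva, hvb, Ne.symm hne]
    have hyAy : y ⬝ᵥ (A *ᵥ y) = -2 := by
      have hmv : ∀ u, (A *ᵥ y) u = A u a - A u b := by
        intro u
        rw [Matrix.mulVec, dotProduct]
        rw [show A u a - A u b = ∑ v, ((if v = a then A u a else 0) - (if v = b then A u b else 0))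
          by rw [Finset.sum_sub_distrib]; simp]
        apply Finset.sum_congr rfl
        intro v _
        by_cases hva : v = a
        · subst hva; simp [hy, hne]
        · by_cases hvb : v = b <;> simp [hy, hva, hvb, Ne.symm hne, zero_sub]
      rw [dotProduct]
      rw [show (-2:ℝ) = ∑ v, ((if v = a then (A a a - A a b) else 0)
          + (if v = b then -(A b a - A b b) else 0)) by
        rw [Finset.sum_add_distrib]
        simp [hA, SimpleGraph.adjMatrix_apply, hab, hab.symm, G.irrefl]; norm_num]
      apply Finset.sum_congr rfl
      intro v _
      by_cases hva : v = a
      · subst hva; simp only [hmv]; simp [hy, hne]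
      · by_cases hvb : v = b
        · subst hvb; simp only [hmv]; simp [hy, hva]
        · simp [hy, hva, hvb]
    have := aux_rayleigh hHerm hmmin y
    rw [hyy, hyAy] at this
    linarith
  have hlmne : lamMin ≠ 0 := ne_of_lt hneg
  -- coloring
  set k : ℕ := G.chromaticNumber.toNat with hk
  have hcol : G.Colorable k := G.colorable_chromaticNumber_of_fintype
  obtain C := hcol.some
  have hkpos : 0 < k := Fin.pos_iff_nonempty.mpr ⟨C a⟩
  have hkR : (1:ℝ) ≤ (k:ℝ) := by exact_mod_cast hkpos
  -- eigenvector
  obtain ⟨x, hx0, hAx⟩ := aux_exists_eigvec h1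
  set s : ℝ := x ⬝ᵥ x with hs_def
  have hs : 0 < s := by
    rcases lt_or_eq_of_le (Finset.sum_nonneg (fun v _ => mul_self_nonneg (x v))) with h | h
    · exact h
    · exact absurd (dotProduct_self_eq_zero.1 h.symm) hx0
  set xi : Fin k → V → ℝ := fun i v => if C v = i then x v else 0 with hxi
  have F2 : ∀ i, xi i ⬝ᵥ x = xi i ⬝ᵥ xi i := by
    intro i
    apply Finset.sum_congr rfl
    intro v _
    by_cases h : C v = i <;> simp [hxi, h]
  have F3 : ∑ i, xi i ⬝ᵥ xi i = s := by
    simp only [dotProduct, hs_def]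
    rw [Finset.sum_comm]
    apply Finset.sum_congr rfl
    intro v _
    rw [show x v * x v = ∑ i, (if C v = i then x v * x v else 0) by simp]
    apply Finset.sum_congr rfl
    intro i _
    by_cases h : C v = i <;> simp [hxi, h]
  have F1 : ∀ i, xi i ⬝ᵥ (A *ᵥ xi i) = 0 := by
    intro i
    apply Finset.sum_eq_zero
    intro u _
    by_cases hu : C u = i
    · have : (A *ᵥ xi i) u = 0 := by
        apply Finset.sum_eq_zero
        intro v _
        by_cases hv : C v = i
        · have : A u v = 0 := by
            simp only [hA, SimpleGraph.adjMatrix_apply, ite_eq_right_iff]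
            intro hadj
            exact absurd (hu.trans hv.symm) (C.valid hadj)
          simp [this]
        · simp [hxi, hv]
      simp [this]
    · simp [hxi, hu]
  have hsym : ∀ w : V → ℝ, x ⬝ᵥ (A *ᵥ w) = (A *ᵥ x) ⬝ᵥ w := by
    intro w
    rw [Matrix.dotProduct_mulVec]
    congr 1
    have hAT : Aᵀ = A := SimpleGraph.transpose_adjMatrix G
    nth_rewrite 1 [← hAT]
    rw [Matrix.vecMul_transpose]
  have hxAx : x ⬝ᵥ (A *ᵥ x) = lam1 * s := by
    rw [hAx, dotProduct_smul, smul_eq_mul, hs_def]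
  have hxa : ∀ i, xi i ⬝ᵥ (A *ᵥ x) = lam1 * (xi i ⬝ᵥ xi i) := by
    intro i
    rw [hAx, dotProduct_smul, smul_eq_mul, F2 i]
  have hax : ∀ i, x ⬝ᵥ (A *ᵥ xi i) = lam1 * (xi i ⬝ᵥ xi i) := by
    intro i
    rw [hsym, hAx, smul_dotProduct, smul_eq_mul, dotProduct_comm, F2 i]
  have key : ∀ i : Fin k, lamMin * (s + ((k:ℝ)^2 - 2*(k:ℝ)) * (xi i ⬝ᵥ xi i))
      ≤ lam1 * s - 2*(k:ℝ)*lam1 * (xi i ⬝ᵥ xi i) := by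
    intro i
    have hray := aux_rayleigh hHerm hmmin (x - (k:ℝ) • xi i)
    have hYY : (x - (k:ℝ) • xi i) ⬝ᵥ (x - (k:ℝ) • xi i)
        = s + ((k:ℝ)^2 - 2*(k:ℝ)) * (xi i ⬝ᵥ xi i) := by
      simp only [sub_dotProduct, dotProduct_sub, smul_dotProduct,
        dotProduct_smul, smul_eq_mul]
      rw [dotProduct_comm x (xi i), F2 i, ← hs_def]
      ring
    have hYA : (x - (k:ℝ) • xi i) ⬝ᵥ (A *ᵥ (x - (k:ℝ) • xi i))
        = lam1 * s - 2*(k:ℝ)*lam1 * (xi i ⬝ᵥ xi i) := by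
      simp only [Matrix.mulVec_sub, Matrix.mulVec_smul, sub_dotProduct,
        dotProduct_sub, smul_dotProduct, dotProduct_smul, smul_eq_mul]
      rw [hxAx, F1 i, hxa i, hax i]
      ring
    rw [hYY, hYA] at hray
    exact hray
  have sum1 : ∑ i : Fin k, (s + ((k:ℝ)^2 - 2*(k:ℝ)) * (xi i ⬝ᵥ xi i))
      = (k:ℝ)*s + ((k:ℝ)^2 - 2*(k:ℝ))*s := by
    rw [Finset.sum_add_distrib, Finset.sum_const, ← Finset.mul_sum, F3]
    simp [nsmul_eq_mul]
  have sum2 : ∑ i : Fin k, (lam1 * s - 2*(k:ℝ)*lam1 * (xi i ⬝ᵥ xi i))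
      = (k:ℝ)*(lam1*s) - 2*(k:ℝ)*lam1*s := by
    rw [Finset.sum_sub_distrib, Finset.sum_const, ← Finset.mul_sum, F3]
    simp [nsmul_eq_mul]
  have total := Finset.sum_le_sum (fun i (_ : i ∈ Finset.univ) => key i)
  rw [← Finset.mul_sum, sum1, sum2] at total
  have hfin : lamMin * ((k:ℝ) - 1) ≤ -lam1 := by
    nlinarith [mul_pos (lt_of_lt_of_le one_pos hkR) hs, total, hs]
  have hdiv : -lam1 / lamMin ≤ (k:ℝ) - 1 := by
    rw [div_le_iff_of_neg hneg]
    linarith [hfin]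
  rw [neg_div] at hdiv
  linarith [hdiv]
end

section
/- Let q = pⁿ > 3 with p an odd prime, and assume there exists a ∈ F_q with a² + 1 not a square in F_q. Then for m ≥ 2, the chromatic number of the unit-quadrance graph D_q^m on F_q^m satisfies χ(F_q^m) ≤ q^(m-2)·(pⁿ + pⁿ⁻¹)/2. -/
open Finset in
/-- The unit-quadrance graph on `F^m`. -/
def unitQuadranceGraphHigher (F : Type*) [Field F] [Fintype F] (m : ℕ) :
    SimpleGraph (Fin m → F) :=
  SimpleGraph.fromRel (fun X Y => ∑ i : Fin m, (X i - Y i) ^ 2 = 1)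


section Aux
variable {F : Type*} [Field F] [Fintype F] [DecidableEq F]

/-- product of a nonzero square and a nonsquare is a nonsquare -/
lemma sq_mul_nonsquare {s x : F} (hs : IsSquare s) (hs0 : s ≠ 0) (hx : ¬ IsSquare x) :
    ¬ IsSquare (s * x) := by
  rintro ⟨t, ht⟩
  obtain ⟨r, rfl⟩ := hs
  have hr : r ≠ 0 := by rintro rfl; simp at hs0
  exact hx ⟨t / r, by field_simp at ht ⊢; linear_combination ht⟩

/-- product of two nonsquares in a finite field of odd char is a square -/
lemma nonsquare_mul_nonsquare (hchar : ringChar F ≠ 2) {x y : F}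
    (hx : ¬ IsSquare x) (hy : ¬ IsSquare y) : IsSquare (x * y) := by
  have hx0 : x ≠ 0 := by rintro rfl; exact hx (by simp)
  have hy0 : y ≠ 0 := by rintro rfl; exact hy (by simp)
  have h1 : quadraticChar F x = -1 := quadraticChar_neg_one_iff_not_isSquare.2 hx
  have h2 : quadraticChar F y = -1 := quadraticChar_neg_one_iff_not_isSquare.2 hy
  have : quadraticChar F (x * y) = 1 := by rw [map_mul, h1, h2]; ring
  exact (quadraticChar_one_iff_isSquare (mul_ne_zero hx0 hy0)).1 this

lemma inv_nonsquare (hchar : ringChar F ≠ 2) {x : F} (hx : ¬ IsSquare x) : ¬ IsSquare x⁻¹ := by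
  intro h
  have hx0 : x ≠ 0 := by rintro rfl; exact hx (by simp)
  obtain ⟨r, hr⟩ := h
  exact hx ⟨r⁻¹, by rw [← mul_inv, ← hr, inv_inv]⟩

end Aux

section AuxA
variable {F : Type*} [Field F] [Fintype F] [DecidableEq F]

lemma exists_nonsquare_pair (hchar : ringChar F ≠ 2) (hq : 3 < Fintype.card F) :
    ∃ u u' e : F, ¬ IsSquare u ∧ ¬ IsSquare u' ∧ e ≠ 0 ∧ u - u' = e * e := by
  have hm1 : (-1 : F) ≠ 0 := by simp
  by_cases hi : IsSquare (-1 : F)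
  · -- -1 square case: subgroup argument
    by_contra hA
    push_neg at hA
    -- hA : ∀ u u' e, ¬IsSquare u → ¬IsSquare u' → e ≠ 0 → u - u' ≠ e * e
    have neg_ns : ∀ {x : F}, ¬ IsSquare x → ¬ IsSquare (-x) := by
      intro x hx
      have := sq_mul_nonsquare hi hm1 hx
      rwa [neg_one_mul] at this
    let H : AddSubgroup F :=
      { carrier := {x | x = 0 ∨ ¬ IsSquare x}
        zero_mem' := Or.inl rfl
        add_mem' := by
          rintro a b (rfl | ha) (rfl | hb)
          · simp
          · simpa using Or.inr hb
          · simpa using Or.inr ha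
          · by_cases h0 : a + b = 0
            · exact Or.inl h0
            · refine Or.inr fun hsq => ?_
              obtain ⟨r, hr⟩ := hsq
              have hr0 : r ≠ 0 := by rintro rfl; simp at hr; exact h0 hr
              exact hA a (-b) r ha (neg_ns hb) hr0 (by rw [sub_neg_eq_add, hr])
        neg_mem' := by
          rintro a (rfl | ha)
          · simp
          · exact Or.inr (neg_ns ha) }
    -- cardinalities
    obtain ⟨u₀, hu₀⟩ := FiniteField.exists_nonsquare (F := F) hchar
    have hu₀0 : u₀ ≠ 0 := by rintro rfl; exact hu₀ (by simp)
    set N : Finset F := Finset.univ.filter (fun x => ¬ IsSquare x) with hN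
    set S : Finset F := Finset.univ.filter (fun x => x ≠ 0 ∧ IsSquare x) with hS
    have hcardNS : N.card = S.card := by
      apply Finset.card_bij (fun a _ => u₀ * a)
      · intro a haa
        simp only [hN, Finset.mem_filter, Finset.mem_univ, true_and] at haa
        have ha0 : a ≠ 0 := by rintro rfl; exact haa (by simp)
        simp only [hS, Finset.mem_filter, Finset.mem_univ, true_and]
        exact ⟨mul_ne_zero hu₀0 ha0, nonsquare_mul_nonsquare hchar hu₀ haa⟩
      · intro a _ b _ h
        exact mul_left_cancel₀ hu₀0 h
      · intro y hy
        simp only [hS, Finset.mem_filter, Finset.mem_univ, true_and] at hy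
        refine ⟨u₀⁻¹ * y, ?_, by field_simp⟩
        simp only [hN, Finset.mem_filter, Finset.mem_univ, true_and]
        intro hsq
        have h0 : u₀⁻¹ * y ≠ 0 := mul_ne_zero (inv_ne_zero hu₀0) hy.1
        have hns := sq_mul_nonsquare hsq h0 hu₀
        have hey : u₀⁻¹ * y * u₀ = y := by field_simp
        rw [hey] at hns
        exact hns hy.2
    -- partition univ by IsSquare
    have hpart : Fintype.card F = N.card + (S.card + 1) := by
      classical
      have h1 : (Finset.univ.filter (fun x : F => IsSquare x)) = insert (0 : F) S := by
        ext x
        simp only [hS, Finset.mem_filter, Finset.mem_univ, true_and, Finset.mem_insert]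
        constructor
        · intro hx
          by_cases hx0 : x = 0
          · exact Or.inl hx0
          · exact Or.inr ⟨hx0, hx⟩
        · rintro (rfl | ⟨_, hx⟩)
          · simp
          · exact hx
      have h0S : (0 : F) ∉ S := by simp [hS]
      have h2 := Finset.card_filter_add_card_filter_not
        (s := (Finset.univ : Finset F)) (p := fun x : F => IsSquare x)
      rw [h1, Finset.card_insert_of_notMem h0S] at h2
      have : N = Finset.univ.filter (fun x : F => ¬ IsSquare x) := hN
      rw [← Finset.card_univ, ← h2, this]
      ring
    -- card H
    have hHcard : Nat.card H = N.card + 1 := by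
      have hset : (H : Set F) = ↑(insert (0 : F) N) := by
        ext x
        show (x = 0 ∨ ¬ IsSquare x) ↔ _
        simp [hN]
      rw [show Nat.card H = Nat.card (H : Set F) from rfl, Nat.card_coe_set_eq, hset,
        Set.ncard_coe_finset, Finset.card_insert_of_notMem (by simp [hN])]
    have hdvd : Nat.card H ∣ Nat.card F := AddSubgroup.card_addSubgroup_dvd_card H
    rw [Nat.card_eq_fintype_card (α := F), hHcard] at hdvd
    rw [← hcardNS] at hpart
    have hd1 : N.card + 1 ∣ 2 * N.card + 1 := by
      rw [show 2 * N.card + 1 = N.card + (N.card + 1) by omega, ← hpart]; exact hdvd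
    have hd2 : N.card + 1 ∣ 2 * N.card + 2 := ⟨2, by ring⟩
    have hd3 : N.card + 1 ∣ 1 := by
      have := Nat.dvd_sub hd2 hd1
      simpa using this
    have := Nat.le_of_dvd one_pos hd3
    omega
  · -- -1 nonsquare case: explicit
    obtain ⟨s, hs⟩ : ∃ s : F, s ∉ ({0, 1, -1} : Finset F) := by
      by_contra h
      push_neg at h
      have hsub : (Finset.univ : Finset F) ⊆ {0, 1, -1} := fun x _ => h x
      have h1 := Finset.card_le_card hsub
      have h2 : ({0, 1, -1} : Finset F).card ≤ 3 := by
        apply le_trans (Finset.card_insert_le _ _)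
        have := Finset.card_insert_le (1 : F) ({-1} : Finset F)
        simp at this ⊢
        omega
      rw [Finset.card_univ] at h1
      omega
    simp only [Finset.mem_insert, Finset.mem_singleton, not_or] at hs
    obtain ⟨hs0, hs1, hsm1⟩ := hs
    have hss1 : s * s - 1 ≠ 0 := by
      intro h
      rcases mul_self_eq_one_iff.1 (by linear_combination h) with h' | h'
      · exact hs1 h'
      · exact hsm1 h'
    have hn2 : ¬ IsSquare (-(s * s)) := by
      have := sq_mul_nonsquare (⟨s, rfl⟩ : IsSquare (s * s)) (mul_ne_zero hs0 hs0) hi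
      rwa [mul_neg_one] at this
    by_cases hsq : IsSquare (s * s - 1)
    · obtain ⟨r, hr⟩ := hsq
      have hr0 : r ≠ 0 := by rintro rfl; simp at hr; exact hss1 hr
      exact ⟨-1, -(s * s), r, hi, hn2, hr0, by rw [← hr]; ring⟩
    · have := nonsquare_mul_nonsquare hchar hsq hi
      rw [mul_neg_one, neg_sub] at this
      obtain ⟨r, hr⟩ := this
      have hr0 : r ≠ 0 := by
        rintro rfl
        simp at hr
        exact hss1 (by linear_combination -hr)
      exact ⟨-(s * s), -1, r, hn2, hi, hr0, by rw [← hr]; ring⟩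

end AuxA

section AuxD
variable {F : Type*} [Field F] [Fintype F] [DecidableEq F]

lemma exists_good_d (hchar : ringChar F ≠ 2) (hq : 3 < Fintype.card F) {a : F}
    (ha : ¬ IsSquare (a ^ 2 + 1)) :
    ∃ d : F, d ≠ 0 ∧ ¬ IsSquare (a ^ 2 + 1 - d ^ 2) := by
  obtain ⟨u, u', e, hu, hu', he0, hee⟩ := exists_nonsquare_pair hchar hq
  have hu0 : u ≠ 0 := by rintro rfl; exact hu (by simp)
  have hu₀0 : (a ^ 2 + 1 : F) ≠ 0 := by rintro h; exact ha (h ▸ (by simp))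
  obtain ⟨m, hm⟩ := nonsquare_mul_nonsquare hchar ha hu
  have hm0 : m ≠ 0 := by
    rintro rfl
    rw [mul_zero] at hm
    exact (mul_ne_zero hu₀0 hu0) hm
  set k := m * u⁻¹ with hk
  have hk0 : k ≠ 0 := mul_ne_zero hm0 (inv_ne_zero hu0)
  refine ⟨e * k, mul_ne_zero he0 hk0, ?_⟩
  have hkey : a ^ 2 + 1 - (e * k) ^ 2 = (k * k) * u' := by
    have h1 : u' = u - e * e := by linear_combination -hee
    rw [h1, hk]
    field_simp
    linear_combination u * hm
  rw [hkey]
  exact sq_mul_nonsquare ⟨k, rfl⟩ (mul_ne_zero hk0 hk0) hu'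

end AuxD
theorem stmt15 (p n : ℕ) (hp : p.Prime) (hpodd : Odd p) (F : Type*) [Field F] [Fintype F]
    (hcard : Fintype.card F = p ^ n) (hq : 3 < p ^ n)
    (ha : ∃ a : F, ¬ ∃ s : F, s ^ 2 = a ^ 2 + 1) (m : ℕ) (hm : 2 ≤ m) :
    (unitQuadranceGraphHigher F m).chromaticNumber
      ≤ ((p ^ n) ^ (m - 2) * (p ^ n + p ^ (n - 1)) / 2 : ℕ) := by
  classical
  obtain ⟨m', rfl⟩ : ∃ m', m = m' + 2 := ⟨m - 2, by omega⟩
  have hp2 : p ≠ 2 := by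
    rintro rfl; exact (Nat.not_odd_iff_even.2 even_two) hpodd
  have hn1 : 1 ≤ n := by
    by_contra h
    push_neg at h
    interval_cases n
    simp at hq
  -- characteristic
  haveI hfact : Fact p.Prime := ⟨hp⟩
  have hchp : CharP F p := by
    obtain ⟨n', hp', hcn⟩ := FiniteField.card F (ringChar F)
    have h1 : p ∣ ringChar F ^ (n' : ℕ) := by
      rw [← hcn, hcard]; exact dvd_pow_self p (by omega)
    have h2 : p = ringChar F := ((Nat.prime_dvd_prime_iff_eq hp hp').1
      (hp.dvd_of_dvd_pow h1))
    rw [h2]; exact ringChar.charP F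
  haveI := hchp
  have hring : ringChar F = p := ringChar.eq F p
  have hchar2 : ringChar F ≠ 2 := by rw [hring]; exact_mod_cast hp2
  have hq' : 3 < Fintype.card F := by rw [hcard]; exact hq
  -- the nonsquare a^2+1 and good d
  obtain ⟨a, ha⟩ := ha
  have ha' : ¬ IsSquare ((a : F) ^ 2 + 1) := by
    intro ⟨r, hr⟩; exact ha ⟨r, by rw [hr]; ring⟩
  obtain ⟨d, hd0, hd⟩ := exists_good_d hchar2 hq' ha'
  -- module structure over ZMod p
  letI : Algebra (ZMod p) F := ZMod.algebra F p
  have hfrk : Module.finrank (ZMod p) F = n := by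
    have h1 : Fintype.card F = p ^ Module.finrank (ZMod p) F := by
      have := Module.card_eq_pow_finrank (K := ZMod p) (V := F)
      rwa [ZMod.card] at this
    rw [hcard] at h1
    exact (Nat.pow_right_injective hp.two_le h1.symm)
  -- linear functional ψ with ψ d = 1
  obtain ⟨ψ, hψd⟩ : ∃ ψ : F →ₗ[ZMod p] ZMod p, ψ d = 1 := by
    let b := Module.finBasis (ZMod p) F
    have hb : b.repr d ≠ 0 := by
      intro h
      exact hd0 (by simpa using congrArg (b.repr.symm) h)
    obtain ⟨i, hi⟩ : ∃ i, b.repr d i ≠ 0 := by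
      by_contra h; push_neg at h; exact hb (Finsupp.ext h)
    exact ⟨(b.repr d i)⁻¹ • (b.coord i), by
      simp [Module.Basis.coord_apply, inv_mul_cancel₀ hi]⟩
  have hψsurj : LinearMap.range ψ = ⊤ := by
    rw [LinearMap.range_eq_top]
    intro k
    exact ⟨k • d, by rw [map_smul, hψd, smul_eq_mul, mul_one]⟩
  set K := LinearMap.ker ψ with hKdef
  have hKcard : Fintype.card K = p ^ (n - 1) := by
    have h1 : Fintype.card K = p ^ Module.finrank (ZMod p) K := by
      have := Module.card_eq_pow_finrank (K := ZMod p) (V := K)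
      rwa [ZMod.card] at this
    have h2 := LinearMap.finrank_range_add_finrank_ker ψ
    rw [hψsurj, finrank_top, Module.finrank_self, hfrk, ← hKdef] at h2
    rw [h1, show Module.finrank (ZMod p) K = n - 1 by omega]
  -- the coloring
  let cfun : (Fin (m' + 2) → F) → F := fun X => X 1 - a * X 0
  have hpair : ∀ k : ZMod p, k.val / 2 < (p + 1) / 2 := by
    intro k; have := ZMod.val_lt k; omega
  have hmem : ∀ X, cfun X - (ψ (cfun X)) • d ∈ K := by
    intro X
    rw [hKdef, LinearMap.mem_ker, map_sub, map_smul, hψd, smul_eq_mul, mul_one, sub_self]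
  let f : (Fin (m' + 2) → F) → K × Fin ((p + 1) / 2) × (Fin m' → F) := fun X =>
    (⟨cfun X - (ψ (cfun X)) • d, hmem X⟩,
     ⟨(ψ (cfun X)).val / 2, hpair _⟩,
     fun j => X j.succ.succ)
  have hvalid : ∀ {X Y}, (unitQuadranceGraphHigher F (m' + 2)).Adj X Y → f X ≠ f Y := by
    intro X Y hadj hfeq
    rw [unitQuadranceGraphHigher, SimpleGraph.fromRel_adj] at hadj
    obtain ⟨hne, hsum⟩ := hadj
    have hsum1 : ∑ i, (X i - Y i) ^ 2 = 1 := by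
      rcases hsum with h | h
      · exact h
      · rw [← h]; exact Finset.sum_congr rfl fun i _ => by ring
    -- extract components of the color equality
    have h1 : cfun X - (ψ (cfun X)) • d = cfun Y - (ψ (cfun Y)) • d := by
      have := congrArg Prod.fst hfeq
      exact Subtype.ext_iff.1 this
    have h2 : (ψ (cfun X)).val / 2 = (ψ (cfun Y)).val / 2 := by
      have := congrArg (fun z => z.2.1) hfeq
      exact Fin.val_eq_of_eq this
    have h3 : ∀ j : Fin m', X j.succ.succ = Y j.succ.succ := by
      intro j
      exact congrFun (congrArg (fun z => z.2.2) hfeq) j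
    -- the two relevant coordinates
    set t := X 0 - Y 0 with ht
    set z := X 1 - Y 1 with hz
    have hsum2 : t ^ 2 + z ^ 2 = 1 := by
      rw [Fin.sum_univ_succ, Fin.sum_univ_succ] at hsum1
      have hz0 : ∑ j : Fin m', (X j.succ.succ - Y j.succ.succ) ^ 2 = 0 :=
        Finset.sum_eq_zero fun j _ => by rw [h3 j]; ring
      rw [hz0, add_zero, Fin.succ_zero_eq_one] at hsum1
      exact hsum1
    -- analyze the ZMod p values
    set k1 := ψ (cfun X) with hk1
    set k2 := ψ (cfun Y) with hk2
    have hv1 : k1.val < p := ZMod.val_lt k1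
    have hv2 : k2.val < p := ZMod.val_lt k2
    have hcases : k1.val = k2.val ∨ k1.val = k2.val + 1 ∨ k2.val = k1.val + 1 := by omega
    have hcast : ∀ k : ZMod p, ((k.val : ℕ) : ZMod p) = k := fun k =>
      ZMod.natCast_rightInverse k
    -- turn smul into algebra-map multiplication
    have hsmul : ∀ (k : ZMod p) (x : F), k • x = algebraMap (ZMod p) F k * x := fun k x =>
      Algebra.smul_def k x
    rw [hsmul, hsmul] at h1
    have hcz : z - a * t = cfun X - cfun Y := by
      simp only [cfun, ht, hz]
      ring
    have hεcases : z - a * t = 0 ∨ z - a * t = d ∨ z - a * t = -d := by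
      rcases hcases with h | h | h
      · left
        have hk : k1 = k2 := by rw [← hcast k1, ← hcast k2, h]
        rw [hk] at h1
        rw [hcz]
        linear_combination h1
      · right; left
        have hk : k1 = k2 + 1 := by rw [← hcast k1, ← hcast k2, h]; push_cast; ring
        have hA : algebraMap (ZMod p) F k1 = algebraMap (ZMod p) F k2 + 1 := by
          rw [hk, map_add, map_one]
        rw [hA] at h1
        rw [hcz]
        linear_combination h1
      · right; right
        have hk : k2 = k1 + 1 := by rw [← hcast k1, ← hcast k2, h]; push_cast; ring
        have hA : algebraMap (ZMod p) F k2 = algebraMap (ZMod p) F k1 + 1 := by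
          rw [hk, map_add, map_one]
        rw [hA] at h1
        rw [hcz]
        linear_combination h1
    have hkey : ¬ IsSquare ((a : F) ^ 2 + 1 - (z - a * t) ^ 2) := by
      rcases hεcases with h | h | h
      · rw [h]; simpa using ha'
      · rw [h]; exact hd
      · rw [h, neg_sq]; exact hd
    exact hkey ⟨(a ^ 2 + 1) * t + a * (z - a * t), by linear_combination (-(a^2+1)) * hsum2⟩
  -- conclude
  let C : (unitQuadranceGraphHigher F (m' + 2)).Coloring (K × Fin ((p + 1) / 2) × (Fin m' → F)) :=
    SimpleGraph.Coloring.mk f hvalid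
  have hcol := C.colorable.chromaticNumber_le
  have hcardC : Fintype.card (K × Fin ((p + 1) / 2) × (Fin m' → F))
      = (p ^ n) ^ (m' + 2 - 2) * (p ^ n + p ^ (n - 1)) / 2 := by
    rw [Fintype.card_prod, Fintype.card_prod, hKcard, Fintype.card_fin, Fintype.card_fun,
      Fintype.card_fin, hcard]
    have h2 : 2 ∣ p + 1 := by
      obtain ⟨j, hj⟩ := hpodd; omega
    have hpn : p ^ n + p ^ (n - 1) = p ^ (n - 1) * (p + 1) := by
      have : p ^ n = p ^ (n - 1) * p := by
        rw [← pow_succ]; congr 1; omega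
      rw [this]; ring
    obtain ⟨c, hc⟩ := h2
    have e1 : 2 * c / 2 = c := by omega
    have e2 : (p ^ n) ^ m' * (p ^ (n - 1) * (2 * c)) = 2 * ((p ^ n) ^ m' * (p ^ (n - 1) * c)) := by
      ring
    rw [show m' + 2 - 2 = m' from rfl, hpn, hc, e1, e2,
      Nat.mul_div_cancel_left _ (by norm_num : 0 < 2)]
    ring
  rw [hcardC] at hcol
  exact hcol
end
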